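/- arXiv:2110.15582 — 6 statements merged into one kernel-verified Lean document; each statement's English description precedes it below -/
import Mathlib

section
/- Let n be an odd positive integer, F the finite field with 2^n elements, and i a positive integer with gcd(i,n) = 1. Define the 𝔽₂-linear map L : F → F by L(c) = c^(2^i) + c^(2^(n−i)). Then the kernel of L is exactly {0, 1}, and the image of L is exactly the set { x ∈ F : Tr(x) = 0 }, where Tr : F → 𝔽₂ is the absolute trace. -/
/-- The absolute trace from `GF(2^n)` to `𝔽₂`. -/
noncomputable def Tr (n : ℕ) : GaloisField 2 n → ZMod 2 :=
  Algebra.trace (ZMod 2) (GaloisField 2 n)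

private lemma powfix {R : Type*} [Monoid R] (c : R) (d : ℕ) (h : c ^ 2 ^ d = c) :
    ∀ k, c ^ 2 ^ (d * k) = c := by
  intro k
  induction k with
  | zero => simp
  | succ k ih =>
      rw [Nat.mul_succ, pow_add, pow_mul, ih, h]

private lemma zmod2_powfix (r : ZMod 2) (j : ℕ) : r ^ 2 ^ j = r := by
  have h2 : r ^ 2 = r := ZMod.pow_card r
  have := powfix r 1 (by simpa using h2) j
  simpa using this

private lemma card_range_mul_card_ker {A B : Type*} [AddGroup A] [AddGroup B]
    (g : A →+ B) : Nat.card g.range * Nat.card g.ker = Nat.card A := by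
  rw [AddSubgroup.card_eq_card_quotient_mul_card_addSubgroup g.ker]
  congr 1
  exact (Nat.card_congr (QuotientAddGroup.quotientKerEquivRange g).toEquiv).symm

/-- For odd `n`, `0 < i ≤ n`, `gcd(i,n) = 1`, the linear map
`L(c) = c^(2^i) + c^(2^(n−i))` has kernel exactly `{0, 1}` and image exactly the
set of trace-zero elements. -/
theorem stmt1 (n i : ℕ) (hn : 0 < n) (hodd : Odd n) (hi : 0 < i) (hin : i ≤ n)
    (hgcd : Nat.gcd i n = 1) :
    {c : GaloisField 2 n | c ^ (2 ^ i) + c ^ (2 ^ (n - i)) = 0} = {0, 1} ∧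
      Set.range (fun c : GaloisField 2 n => c ^ (2 ^ i) + c ^ (2 ^ (n - i))) =
        {x : GaloisField 2 n | Tr n x = 0} := by
  set F := GaloisField 2 n with hF
  letI : Fintype F := Fintype.ofFinite F
  have hcardF : Nat.card F = 2 ^ n := GaloisField.card (p := 2) (n := n) hn.ne'
  have hpowcard : ∀ c : F, c ^ 2 ^ n = c := by
    intro c
    have := FiniteField.pow_card c
    rwa [← Nat.card_eq_fintype_card, hcardF] at this
  -- the kernel statement
  have hker : {c : F | c ^ (2 ^ i) + c ^ (2 ^ (n - i)) = 0} = {0, 1} := by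
    ext c
    simp only [Set.mem_setOf_eq, Set.mem_insert_iff, Set.mem_singleton_iff]
    constructor
    · intro h
      have heq : c ^ 2 ^ i = c ^ 2 ^ (n - i) := by
        have := neg_eq_of_add_eq_zero_left h
        rw [CharTwo.neg_eq] at this
        exact this.symm
      -- raise to the 2^i power
      have h2i : c ^ 2 ^ (2 * i) = c := by
        have := congrArg (fun x : F => x ^ 2 ^ i) heq
        simp only [← pow_mul, ← pow_add] at this
        rw [Nat.sub_add_cancel hin] at this
        rw [two_mul, this, hpowcard]
      -- c ^ 2 = c
      have hc2 : c ^ 2 = c := by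
        rcases eq_or_lt_of_le (show 1 ≤ n from hn) with h1 | h1
        · have h2 := hpowcard c
          have hn1 : (2 : ℕ) ^ n = 2 := by rw [← h1, pow_one]
          rwa [hn1] at h2
        · have hcop : Nat.Coprime (2 * i) n :=
            Nat.Coprime.mul hodd.coprime_two_left hgcd
          obtain ⟨m, -, hm⟩ := Nat.exists_mul_mod_eq_one_of_coprime hcop h1
          have hdiv : 2 * i * m = n * (2 * i * m / n) + 1 := by
            conv_lhs => rw [← Nat.div_add_mod (2 * i * m) n, hm]
          have hA : c ^ 2 ^ (2 * i * m) = c := powfix c (2 * i) h2i m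
          have hB : c ^ 2 ^ (n * (2 * i * m / n)) = c :=
            powfix c n (hpowcard c) (2 * i * m / n)
          calc c ^ 2 = (c ^ 2 ^ (n * (2 * i * m / n))) ^ 2 := by rw [hB]
            _ = c ^ 2 ^ (n * (2 * i * m / n) + 1) := by rw [← pow_mul, ← pow_succ]
            _ = c := by rw [← hdiv, hA]
      have : c * (c - 1) = 0 := by
        calc c * (c - 1) = c ^ 2 - c := by ring
          _ = 0 := by rw [hc2, sub_self]
      rcases mul_eq_zero.mp this with h0 | h1
      · exact Or.inl h0
      · exact Or.inr (by linear_combination h1)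
    · rintro (rfl | rfl)
      · simp [zero_pow (pow_ne_zero _ two_ne_zero)]
      · simp [CharTwo.add_self_eq_zero]
  refine ⟨hker, ?_⟩
  -- trace is invariant under Frobenius powers
  have htrfrob : ∀ (j : ℕ) (c : F),
      Algebra.trace (ZMod 2) F (c ^ 2 ^ j) = Algebra.trace (ZMod 2) F c := by
    intro j c
    let φ : F →ₐ[ZMod 2] F :=
      { iterateFrobenius F 2 j with
        commutes' := fun r => by
          simp only [RingHom.toMonoidHom_eq_coe, OneHom.toFun_eq_coe, MonoidHom.toOneHom_coe,
            MonoidHom.coe_coe, iterateFrobenius_def]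
          rw [← map_pow, zmod2_powfix] }
    have hbij : Function.Bijective φ :=
      (Finite.injective_iff_bijective).mp (φ.toRingHom.injective)
    have := Algebra.trace_eq_of_algEquiv (AlgEquiv.ofBijective φ hbij) c
    simpa [AlgEquiv.ofBijective, φ, iterateFrobenius_def] using this
  -- the map as an additive monoid hom
  let f : F →+ F := AddMonoidHom.mk' (fun c => c ^ 2 ^ i + c ^ 2 ^ (n - i)) (by
    intro a b
    show (a + b) ^ 2 ^ i + (a + b) ^ 2 ^ (n - i) =
      (a ^ 2 ^ i + a ^ 2 ^ (n - i)) + (b ^ 2 ^ i + b ^ 2 ^ (n - i))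
    rw [add_pow_char_pow, add_pow_char_pow]
    ring)
  have hrange : Set.range (fun c : F => c ^ 2 ^ i + c ^ 2 ^ (n - i)) = ↑f.range := by
    rw [AddMonoidHom.coe_range]; rfl
  -- trace as an additive monoid hom
  let T : F →+ ZMod 2 := (Algebra.trace (ZMod 2) F).toAddMonoidHom
  have hTset : {x : F | Tr n x = 0} = ↑T.ker := by
    ext x; simp [T, Tr, AddMonoidHom.mem_ker]; exact Iff.rfl
  -- range f ⊆ ker T
  have hsub : (↑f.range : Set F) ⊆ ↑T.ker := by
    rintro x ⟨c, rfl⟩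
    simp only [SetLike.mem_coe, AddMonoidHom.mem_ker]
    show Algebra.trace (ZMod 2) F (c ^ 2 ^ i + c ^ 2 ^ (n - i)) = 0
    rw [map_add, htrfrob, htrfrob, CharTwo.add_self_eq_zero]
  -- cardinality of kernel of f
  have hkerf : (↑f.ker : Set F) = {0, 1} := by
    rw [← hker]; ext c; simp [f, AddMonoidHom.mem_ker]
  have hcardkerf : Nat.card f.ker = 2 := by
    have h2 : (↑f.ker : Set F).ncard = 2 := by
      rw [hkerf]; exact Set.ncard_pair zero_ne_one
    rw [← Nat.card_coe_set_eq] at h2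
    exact h2
  -- T is surjective
  have hTsurj : Function.Surjective T := by
    have hnz : Algebra.trace (ZMod 2) F ≠ 0 := Algebra.trace_ne_zero (ZMod 2) F
    obtain ⟨b, hb⟩ : ∃ b : F, Algebra.trace (ZMod 2) F b ≠ 0 := by
      by_contra hcon
      push_neg at hcon
      exact hnz (LinearMap.ext fun y => by simpa using hcon y)
    intro x
    have hx : x = 0 ∨ x = 1 := by
      have : ∀ y : ZMod 2, y = 0 ∨ y = 1 := by decide
      exact this x
    rcases hx with rfl | rfl
    · exact ⟨0, map_zero T⟩
    · refine ⟨b, ?_⟩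
      have : ∀ y : ZMod 2, y ≠ 0 → y = 1 := by decide
      exact this _ hb
  have hcardTrange : Nat.card T.range = 2 := by
    have : T.range = ⊤ := AddMonoidHom.range_eq_top.mpr hTsurj
    rw [this]
    have e : Nat.card (⊤ : AddSubgroup (ZMod 2)) = Nat.card (ZMod 2) :=
      Nat.card_congr AddSubgroup.topEquiv.toEquiv
    rw [e, Nat.card_zmod]
  have h2n : 2 ^ n = 2 ^ (n - 1) * 2 := by
    rw [← pow_succ]
    congr 1
    omega
  have hcardrangef : Nat.card f.range = 2 ^ (n - 1) := by
    have h := card_range_mul_card_ker f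
    rw [hcardkerf, hcardF, h2n] at h
    exact Nat.eq_of_mul_eq_mul_right (by norm_num) h
  have hcardkerT : Nat.card T.ker = 2 ^ (n - 1) := by
    have h := card_range_mul_card_ker T
    rw [hcardTrange, hcardF, h2n, mul_comm] at h
    exact Nat.eq_of_mul_eq_mul_right (by norm_num) h
  rw [hrange, hTset]
  refine Set.eq_of_subset_of_ncard_le hsub ?_ (Set.toFinite _)
  have e1 : (↑f.range : Set F).ncard = 2 ^ (n - 1) := by
    rw [← Nat.card_coe_set_eq]; exact hcardrangef
  have e2 : (↑T.ker : Set F).ncard = 2 ^ (n - 1) := by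
    rw [← Nat.card_coe_set_eq]; exact hcardkerT
  rw [e1, e2]
end

section
/- Let n be an odd positive integer, F the finite field with 2^n elements, i a positive integer with gcd(i,n) = 1, and f : F → F the Gold function f(x) = x^(2^i+1). Then (a,b) ∈ F × F is a Walsh zero of f if and only if either (b ≠ 0 and Tr(a · b^(−1/(2^i+1))) = 0) or (a ≠ 0 and b = 0). -/
noncomputable instance (n : ℕ) : Fintype (GaloisField 2 n) := Fintype.ofFinite _

/-- The Walsh transform of `f : GF(2^n) → GF(2^n)` at `(a, b)`. -/
noncomputable def W (n : ℕ) (f : GaloisField 2 n → GaloisField 2 n)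
    (a b : GaloisField 2 n) : ℤ :=
  ∑ x : GaloisField 2 n, (-1) ^ (Tr n (a * x + b * f x)).val

section Aux
variable (n : ℕ)

lemma tr_add (x y : GaloisField 2 n) : Tr n (x + y) = Tr n x + Tr n y := map_add _ x y

lemma tr_zero : Tr n 0 = 0 := map_zero (Algebra.trace (ZMod 2) (GaloisField 2 n))

lemma chi_add' : ∀ s t : ZMod 2,
    ((-1 : ℤ)) ^ ((s + t).val) = ((-1 : ℤ)) ^ s.val * ((-1 : ℤ)) ^ t.val := by decide

lemma chi_add (s t : ZMod 2) :
    ((-1 : ℤ)) ^ ((s + t).val) = ((-1 : ℤ)) ^ s.val * ((-1 : ℤ)) ^ t.val := chi_add' s t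

lemma card_gf (h : n ≠ 0) : Fintype.card (GaloisField 2 n) = 2 ^ n := by
  rw [← GaloisField.card 2 n h]; exact (Nat.card_eq_fintype_card).symm

lemma tr_one (h : n ≠ 0) (hodd : Odd n) : Tr n 1 = 1 := by
  have h1 := Algebra.trace_algebraMap (R := ZMod 2) (S := GaloisField 2 n) 1
  rw [map_one] at h1
  rw [Tr, h1, GaloisField.finrank 2 h]
  have : (n : ZMod 2) = ((n % 2 : ℕ) : ZMod 2) := (ZMod.natCast_mod n 2).symm
  rw [Nat.odd_iff.mp hodd] at this
  simpa using this

/-- frobenius as an algebra equivalence over `ZMod 2` -/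
noncomputable def frobAE : GaloisField 2 n ≃ₐ[ZMod 2] GaloisField 2 n :=
  AlgEquiv.ofRingEquiv (f := frobeniusEquiv (GaloisField 2 n) 2)
    (fun c => by
      rw [frobeniusEquiv_def, ← map_pow]
      congr 1
      have : ∀ t : ZMod 2, t ^ 2 = t := by decide
      exact this c)

lemma tr_sq (x : GaloisField 2 n) : Tr n (x ^ 2) = Tr n x := by
  have h1 := trace_eq_sum_automorphisms (K := ZMod 2) (x ^ 2)
  have h2 := trace_eq_sum_automorphisms (K := ZMod 2) x
  have key : ∑ σ : GaloisField 2 n ≃ₐ[ZMod 2] GaloisField 2 n, σ (x ^ 2)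
      = ∑ σ : GaloisField 2 n ≃ₐ[ZMod 2] GaloisField 2 n, σ x := by
    have hx : ∀ σ : GaloisField 2 n ≃ₐ[ZMod 2] GaloisField 2 n,
        σ (x ^ 2) = (σ * frobAE n) x := fun σ => rfl
    rw [Fintype.sum_congr _ _ hx]
    exact Fintype.sum_equiv (Equiv.mulRight (frobAE n)) _ _ (fun σ => rfl)
  rw [key, ← h2] at h1
  exact (algebraMap (ZMod 2) (GaloisField 2 n)).injective h1

lemma tr_pow2 (k : ℕ) (x : GaloisField 2 n) : Tr n (x ^ 2 ^ k) = Tr n x := by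
  induction k with
  | zero => simp
  | succ k ih =>
    have : x ^ 2 ^ (k + 1) = (x ^ 2 ^ k) ^ 2 := by
      rw [← pow_mul, pow_succ]
    rw [this, tr_sq, ih]

lemma pow_card_one (h : n ≠ 0) (x : GaloisField 2 n) : x ^ (2 ^ n) = x := by
  have := FiniteField.pow_card x
  rwa [card_gf n h] at this

lemma pow_iter {k : ℕ} {x : GaloisField 2 n} (h : x ^ (2 ^ k) = x) (m : ℕ) :
    x ^ (2 ^ (k * m)) = x := by
  induction m with
  | zero => simp
  | succ m ih =>
    have : x ^ 2 ^ (k * (m + 1)) = (x ^ 2 ^ (k * m)) ^ 2 ^ k := by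
      rw [← pow_mul, ← pow_add, Nat.mul_succ]
    rw [this, ih, h]

lemma pow_card_iter (h : n ≠ 0) (m : ℕ) (x : GaloisField 2 n) : x ^ (2 ^ (n * m)) = x :=
  pow_iter n (pow_card_one n h x) m

/-- trace-moving lemma -/
lemma tr_move (h : n ≠ 0) (i : ℕ) (x u : GaloisField 2 n) :
    Tr n (x ^ (2 ^ i) * u) = Tr n (x * u ^ (2 ^ (i * (n - 1)))) := by
  set e := i * (n - 1) with he
  have key : (x * u ^ (2 ^ e)) ^ (2 ^ i) = x ^ (2 ^ i) * u := by
    rw [mul_pow, ← pow_mul, ← pow_add]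
    congr 1
    have : e + i = n * i := by
      rw [he]; cases n with
      | zero => exact absurd rfl h
      | succ n => simp only [Nat.add_sub_cancel]; ring
    rw [this, pow_card_iter n h i u]
  rw [← key, tr_pow2]

lemma char_sum_zero (h : n ≠ 0) :
    (∑ x : GaloisField 2 n, (-1 : ℤ) ^ (Tr n ((0 : GaloisField 2 n) * x)).val)
      = (2 ^ n : ℤ) := by
  simp [tr_zero, card_gf n h]

/-- character sum over the field -/
lemma char_sum (h : n ≠ 0) (hodd : Odd n) (d : GaloisField 2 n) (hd : d ≠ 0) :
    (∑ x : GaloisField 2 n, (-1 : ℤ) ^ (Tr n (d * x)).val) = 0 := by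
    set S := ∑ x : GaloisField 2 n, (-1 : ℤ) ^ (Tr n (d * x)).val with hS
    have hx0 : Tr n (d * d⁻¹) = 1 := by
      rw [mul_inv_cancel₀ hd, tr_one n h hodd]
    have hneg : ∀ x : GaloisField 2 n,
        (-1 : ℤ) ^ (Tr n (d * (x + d⁻¹))).val = -(-1 : ℤ) ^ (Tr n (d * x)).val := by
      intro x
      rw [mul_add, tr_add, chi_add, hx0]
      have hv : ((1 : ZMod 2)).val = 1 := rfl
      rw [hv]; ring
    have h2 : S = -S := by
      calc S = ∑ x : GaloisField 2 n, (-1 : ℤ) ^ (Tr n (d * (x + d⁻¹))).val :=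
            (Fintype.sum_equiv (Equiv.addRight d⁻¹)
              (fun x => (-1 : ℤ) ^ (Tr n (d * (x + d⁻¹))).val)
              (fun x => (-1 : ℤ) ^ (Tr n (d * x)).val) (fun x => rfl)).symm
        _ = ∑ x : GaloisField 2 n, -((-1 : ℤ) ^ (Tr n (d * x)).val) :=
            Finset.sum_congr rfl (fun x _ => hneg x)
        _ = -S := by rw [← Finset.sum_neg_distrib]
    omega

/-- the central Gold sum computation -/
lemma gold_sum (i : ℕ) (hn : 0 < n) (hodd : Odd n) (hi : 0 < i)
    (hgcd : Nat.gcd i n = 1) (c : GaloisField 2 n) :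
    ((∑ x : GaloisField 2 n, (-1 : ℤ) ^ (Tr n (c * x + x ^ (2 ^ i + 1))).val) = 0)
      ↔ Tr n c = 0 := by
  classical
  have hn0 : n ≠ 0 := hn.ne'
  set e := i * (n - 1) with he
  set m := 2 ^ i + 1 with hm
  set L : GaloisField 2 n → GaloisField 2 n := fun u => u ^ (2 ^ e) + u ^ (2 ^ i) with hL
  set f : GaloisField 2 n → ℤ := fun x => (-1 : ℤ) ^ (Tr n (c * x + x ^ m)).val with hf
  set S := ∑ x : GaloisField 2 n, f x with hSdef
  -- kernel of L
  have hker : ∀ u : GaloisField 2 n, L u = 0 → u = 0 ∨ u = 1 := by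
    intro u hu
    have h2f : (2 : GaloisField 2 n) = 0 := by
      have := CharP.cast_eq_zero (GaloisField 2 n) 2; exact_mod_cast this
    have heq : u ^ (2 ^ e) = u ^ (2 ^ i) := by
      have : u ^ (2 ^ e) + u ^ (2 ^ i) = 0 := hu
      linear_combination this - u ^ (2 ^ i) * h2f
    have h2i : u ^ (2 ^ (2 * i)) = u := by
      have := congrArg (fun z : GaloisField 2 n => z ^ (2 ^ i)) heq
      simp only [← pow_mul, ← pow_add] at this
      have hei : e + i = n * i := by
        rw [he, ← Nat.mul_succ]
        have : (n - 1).succ = n := Nat.succ_pred_eq_of_pos hn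
        rw [this, Nat.mul_comm]
      rw [hei, pow_card_iter n hn0 i u] at this
      rw [two_mul]; exact this.symm
    -- conclude u^2 = u
    have husq : u ^ 2 = u := by
      rcases Nat.lt_or_ge 1 n with h1n | h1n
      · have hcop : Nat.Coprime (2 * i) n :=
          Nat.Coprime.mul (Nat.coprime_two_left.mpr hodd) hgcd
        obtain ⟨s, -, hs⟩ := Nat.exists_mul_mod_eq_one_of_coprime hcop h1n
        have hdm : 2 * i * s = n * (2 * i * s / n) + 1 := by
          conv_lhs => rw [← Nat.div_add_mod (2 * i * s) n]
          rw [hs]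
        have h1 : u ^ (2 ^ (2 * i * s)) = u := pow_iter n h2i s
        rw [hdm] at h1
        have h2 : u ^ (2 ^ (n * (2 * i * s / n) + 1)) = u ^ 2 := by
          rw [pow_succ 2, pow_mul, pow_card_iter n hn0]
        rw [h2] at h1; exact h1
      · -- n = 1
        have hn1 : n = 1 := by omega
        have hc := pow_card_one n hn0 u
        have h21 : (2 : ℕ) ^ n = 2 := by rw [hn1, pow_one]
        rwa [h21] at hc
    have : u * (u - 1) = 0 := by linear_combination husq
    rcases mul_eq_zero.mp this with h | h
    · exact Or.inl h
    · exact Or.inr (by linear_combination h)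
  have h2f : (2 : GaloisField 2 n) = 0 := by
    have := CharP.cast_eq_zero (GaloisField 2 n) 2; exact_mod_cast this
  have hL0 : L 0 = 0 := by
    have h1 : (0 : GaloisField 2 n) ^ (2 ^ e) = 0 := zero_pow (by positivity)
    have h2 : (0 : GaloisField 2 n) ^ (2 ^ i) = 0 := zero_pow (by positivity)
    simp only [hL]; rw [h1, h2, add_zero]
  have hL1 : L 1 = 0 := by
    simp only [hL, one_pow]; linear_combination h2f
  -- pointwise product formula
  have hprod : ∀ x u : GaloisField 2 n, f x * f (x + u)
      = (-1 : ℤ) ^ (Tr n (c * u + u ^ m)).val * (-1 : ℤ) ^ (Tr n (L u * x)).val := by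
    intro x u
    have htr : Tr n (c * x + x ^ m) + Tr n (c * (x + u) + (x + u) ^ m)
        = Tr n (c * u + u ^ m) + Tr n (L u * x) := by
      rw [← tr_add]
      have hfield : (c * x + x ^ m) + (c * (x + u) + (x + u) ^ m)
          = (c * u + u ^ m) + (x ^ (2 ^ i) * u + x * u ^ (2 ^ i)) := by
        have hxu : (x + u) ^ m = (x ^ (2 ^ i) + u ^ (2 ^ i)) * (x + u) := by
          rw [hm, pow_succ, add_pow_char_pow]
        have hxm : x ^ m = x ^ (2 ^ i) * x := pow_succ x (2 ^ i)
        have hum : u ^ m = u ^ (2 ^ i) * u := pow_succ u (2 ^ i)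
        rw [hxu, hxm, hum]
        linear_combination (c * x + x ^ (2 ^ i) * x) * h2f
      rw [hfield, tr_add, tr_add]
      congr 1
      rw [tr_add, tr_move n hn0 i x u, ← tr_add]
      congr 1
      simp only [hL]; ring
    rw [hf]
    dsimp only
    rw [← chi_add, ← chi_add, htr]
  -- squaring the sum
  have hSS : S * S = ∑ u : GaloisField 2 n, ((-1 : ℤ) ^ (Tr n (c * u + u ^ m)).val
      * ∑ x : GaloisField 2 n, (-1 : ℤ) ^ (Tr n (L u * x)).val) := by
    calc S * S = ∑ x : GaloisField 2 n, ∑ y : GaloisField 2 n, f x * f y := by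
          rw [hSdef, Finset.sum_mul_sum]
      _ = ∑ x : GaloisField 2 n, ∑ u : GaloisField 2 n, f x * f (x + u) :=
          Finset.sum_congr rfl (fun x _ =>
            (Fintype.sum_equiv (Equiv.addLeft x)
              (fun u => f x * f (x + u)) (fun y => f x * f y) (fun u => rfl)).symm)
      _ = ∑ u : GaloisField 2 n, ∑ x : GaloisField 2 n, f x * f (x + u) := Finset.sum_comm
      _ = ∑ u : GaloisField 2 n, ∑ x : GaloisField 2 n, ((-1 : ℤ) ^ (Tr n (c * u + u ^ m)).val
            * (-1 : ℤ) ^ (Tr n (L u * x)).val) :=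
          Finset.sum_congr rfl (fun u _ =>
            Finset.sum_congr rfl (fun x _ => hprod x u))
      _ = _ := Finset.sum_congr rfl (fun u _ => (Finset.mul_sum _ _ _).symm)
  -- restrict the sum to {0, 1}
  have hvanish : ∀ u : GaloisField 2 n, u ∉ ({0, 1} : Finset (GaloisField 2 n)) →
      ((-1 : ℤ) ^ (Tr n (c * u + u ^ m)).val
        * ∑ x : GaloisField 2 n, (-1 : ℤ) ^ (Tr n (L u * x)).val) = 0 := by
    intro u hu
    have hLu : L u ≠ 0 := by
      intro h0
      rcases hker u h0 with rfl | rfl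
      · exact hu (by simp)
      · exact hu (by simp)
    rw [char_sum n hn0 hodd (L u) hLu, mul_zero]
  have hrestrict : S * S = ∑ u ∈ ({0, 1} : Finset (GaloisField 2 n)),
      ((-1 : ℤ) ^ (Tr n (c * u + u ^ m)).val
        * ∑ x : GaloisField 2 n, (-1 : ℤ) ^ (Tr n (L u * x)).val) := by
    rw [hSS]
    exact (Finset.sum_subset (Finset.subset_univ _)
      (fun u _ hu => hvanish u hu)).symm
  have h01 : (0 : GaloisField 2 n) ≠ 1 := zero_ne_one
  rw [Finset.sum_pair h01] at hrestrict
  -- evaluate at 0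
  have hm0 : (0 : GaloisField 2 n) ^ m = 0 := zero_pow (by rw [hm]; positivity)
  have hterm0 : c * (0 : GaloisField 2 n) + (0 : GaloisField 2 n) ^ m = 0 := by rw [hm0, mul_zero, add_zero]
  have hval0 : ((0 : ZMod 2)).val = 0 := rfl
  have hval1 : ((1 : ZMod 2)).val = 1 := rfl
  have heval0 : ((-1 : ℤ) ^ (Tr n (c * (0 : GaloisField 2 n) + (0 : GaloisField 2 n) ^ m)).val
      * ∑ x : GaloisField 2 n, (-1 : ℤ) ^ (Tr n (L (0 : GaloisField 2 n) * x)).val) = 2 ^ n := by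
    rw [hterm0, tr_zero, hval0, pow_zero, one_mul, hL0]
    exact char_sum_zero n hn0
  have heval1 : ((-1 : ℤ) ^ (Tr n (c * (1 : GaloisField 2 n) + (1 : GaloisField 2 n) ^ m)).val
      * ∑ x : GaloisField 2 n, (-1 : ℤ) ^ (Tr n (L (1 : GaloisField 2 n) * x)).val) =
      (-1 : ℤ) ^ (Tr n c + 1).val * 2 ^ n := by
    rw [hL1, char_sum_zero n hn0]
    congr 2
    rw [one_pow, mul_one, tr_add, tr_one n hn0 hodd]
  rw [heval0, heval1] at hrestrict
  -- case on Tr n c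
  have hcase : ∀ t : ZMod 2, t = 0 ∨ t = 1 := by decide
  rcases hcase (Tr n c) with htc | htc
  · have : S * S = 0 := by
      rw [hrestrict, htc, zero_add, hval1]
      ring
    rw [mul_self_eq_zero] at this
    simp [this, htc]
  · have h11 : ((1 : ZMod 2) + 1) = 0 := by decide
    have : S * S = 2 ^ n + 2 ^ n := by
      rw [hrestrict, htc, h11, hval0, pow_zero, one_mul]
    constructor
    · intro hS0
      rw [hS0, mul_zero] at this
      have : (0:ℤ) < 2 ^ n + 2 ^ n := by positivity
      omega
    · intro h0
      rw [htc] at h0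
      exact absurd h0 (by decide)
end Aux

/-- A WZ space of `f`: an `𝔽₂`-subspace of `GF(2^n) × GF(2^n)` of dimension `n`
all of whose nonzero elements are Walsh zeros of `f`. -/
def IsWZSpace (n : ℕ) (f : GaloisField 2 n → GaloisField 2 n)
    (S : Submodule (ZMod 2) (GaloisField 2 n × GaloisField 2 n)) : Prop :=
  Module.finrank (ZMod 2) S = n ∧
    ∀ p ∈ S, p ≠ (0 : GaloisField 2 n × GaloisField 2 n) → W n f p.1 p.2 = 0


/-- Walsh zero test for Gold APN functions: for odd `n`, `gcd(i,n) = 1`,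
`f(x) = x^(2^i+1)`, the pair `(a,b)` is a Walsh zero of `f` iff
`b ≠ 0` and `Tr(a·b^(−1/(2^i+1))) = 0`, or `a ≠ 0` and `b = 0`.
Here `g` is the map `y ↦ y^(−1/(2^i+1))`, characterized by `(g y)^(2^i+1) = y⁻¹`
(with the convention `0⁻¹ = 0`). -/
theorem stmt2 (n i : ℕ) (hn : 0 < n) (hodd : Odd n) (hi : 0 < i)
    (hgcd : Nat.gcd i n = 1)
    (f : GaloisField 2 n → GaloisField 2 n) (hf : ∀ x, f x = x ^ (2 ^ i + 1))
    (g : GaloisField 2 n → GaloisField 2 n) (hg : ∀ y, (g y) ^ (2 ^ i + 1) = y⁻¹)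
    (a b : GaloisField 2 n) :
    W n f a b = 0 ↔ ((b ≠ 0 ∧ Tr n (a * g b) = 0) ∨ (a ≠ 0 ∧ b = 0)) := by
  have hn0 : n ≠ 0 := hn.ne'
  by_cases hb : b = 0
  · subst hb
    by_cases ha : a = 0
    · subst ha
      have hW : W n f 0 0 = (2 ^ n : ℤ) := by
        rw [W]
        have hpt : ∀ x : GaloisField 2 n,
            (-1 : ℤ) ^ (Tr n ((0 : GaloisField 2 n) * x + 0 * f x)).val = 1 := by
          intro x
          have h0 : (0 : GaloisField 2 n) * x + 0 * f x = 0 := by ring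
          rw [h0, tr_zero]
          rfl
        rw [Finset.sum_congr rfl (fun x _ => hpt x), Finset.sum_const]
        simp [card_gf n hn0]
      rw [hW]
      constructor
      · intro h
        exact absurd h (pow_ne_zero n (by norm_num))
      · rintro (⟨h, _⟩ | ⟨h, _⟩) <;> exact absurd rfl h
    · have hW : W n f a 0 = 0 := by
        rw [W]
        have hpt : ∀ x : GaloisField 2 n,
            (-1 : ℤ) ^ (Tr n (a * x + 0 * f x)).val
              = (-1 : ℤ) ^ (Tr n (a * x)).val := by
          intro x
          congr 2
          ring
        rw [Finset.sum_congr rfl (fun x _ => hpt x)]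
        exact char_sum n hn0 hodd a ha
      rw [hW]
      simp [ha]
  · have hgb : g b ≠ 0 := by
      intro h0
      have hh := hg b
      rw [h0, zero_pow (by positivity)] at hh
      exact hb (by rwa [eq_comm, inv_eq_zero] at hh)
    have hpt : ∀ z : GaloisField 2 n,
        (-1 : ℤ) ^ (Tr n ((a * g b) * z + z ^ (2 ^ i + 1))).val
          = (-1 : ℤ) ^ (Tr n (a * ((Equiv.mulLeft₀ (g b) hgb) z)
              + b * f ((Equiv.mulLeft₀ (g b) hgb) z))).val := by
      intro z
      have hez : (Equiv.mulLeft₀ (g b) hgb) z = g b * z := rfl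
      rw [hez]
      congr 2
      have h1 : (g b * z) ^ (2 ^ i + 1) = b⁻¹ * z ^ (2 ^ i + 1) := by
        rw [mul_pow, hg]
      rw [hf, h1, ← mul_assoc b, mul_inv_cancel₀ hb, one_mul, ← mul_assoc]
    have hWS : W n f a b = ∑ z : GaloisField 2 n,
        (-1 : ℤ) ^ (Tr n ((a * g b) * z + z ^ (2 ^ i + 1))).val := by
      rw [W]
      exact (Fintype.sum_equiv (Equiv.mulLeft₀ (g b) hgb) _ _ hpt).symm
    rw [hWS, gold_sum n i hn hodd hi hgcd (a * g b)]
    constructor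
    · exact fun h => Or.inl ⟨hb, h⟩
    · rintro (⟨_, h⟩ | ⟨_, h0⟩)
      · exact h
      · exact absurd h0 hb
end

section
/- Let F be the finite field with 2^n elements and f : F → F a function. If there exist two WZ spaces S and T of f with S ∩ T = {(0,0)}, then f is CCZ equivalent to a permutation of F; that is, there exist a bijection g : F → F and an 𝔽₂-affine bijection of F × F mapping the graph {(x, f(x)) : x ∈ F} onto the graph {(x, g(x)) : x ∈ F}. -/
set_option maxHeartbeats 1000000
set_option synthInstance.maxHeartbeats 400000

/-! ### Auxiliary development -/

noncomputable instance instFintypeSubWZ (n : ℕ)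
    (S : Submodule (ZMod 2) (GaloisField 2 n × GaloisField 2 n)) : Fintype ↥S :=
  Fintype.ofFinite _

/-- The sign character of `𝔽₂`. -/
def χ : ZMod 2 → ℤ := fun a => (-1) ^ a.val

lemma χ_apply (a : ZMod 2) : χ a = (-1) ^ a.val := rfl

lemma χ_add (a b : ZMod 2) : χ (a + b) = χ a * χ b := by revert a b; decide

lemma χ_zero : χ 0 = 1 := rfl

lemma Tr_add (n : ℕ) (x y : GaloisField 2 n) : Tr n (x + y) = Tr n x + Tr n y :=
  map_add (Algebra.trace (ZMod 2) (GaloisField 2 n)) x y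

lemma Tr_zero (n : ℕ) : Tr n 0 = 0 :=
  map_zero (Algebra.trace (ZMod 2) (GaloisField 2 n))

lemma Tr_smul (n : ℕ) (c : ZMod 2) (x : GaloisField 2 n) : Tr n (c • x) = c • Tr n x :=
  map_smul (Algebra.trace (ZMod 2) (GaloisField 2 n)) c x

/-- The standard bilinear pairing on `GF(2^n) × GF(2^n)` induced by the trace. -/
noncomputable def Bf (n : ℕ) :
    (GaloisField 2 n × GaloisField 2 n) →ₗ[ZMod 2]
      (GaloisField 2 n × GaloisField 2 n) →ₗ[ZMod 2] ZMod 2 :=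
  LinearMap.mk₂ (ZMod 2) (fun p q => Tr n (p.1 * q.1 + p.2 * q.2))
    (fun p p' q => by
      show Tr n ((p + p').1 * q.1 + (p + p').2 * q.2) = _
      have h : (p + p').1 * q.1 + (p + p').2 * q.2
          = (p.1 * q.1 + p.2 * q.2) + (p'.1 * q.1 + p'.2 * q.2) := by
        simp only [Prod.fst_add, Prod.snd_add]; ring
      rw [h, Tr_add])
    (fun c p q => by
      show Tr n ((c • p).1 * q.1 + (c • p).2 * q.2) = _
      have h : (c • p).1 * q.1 + (c • p).2 * q.2 = c • (p.1 * q.1 + p.2 * q.2) := by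
        simp only [Prod.smul_fst, Prod.smul_snd, smul_mul_assoc, smul_add]
      rw [h, Tr_smul])
    (fun p q q' => by
      show Tr n (p.1 * (q + q').1 + p.2 * (q + q').2) = _
      have h : p.1 * (q + q').1 + p.2 * (q + q').2
          = (p.1 * q.1 + p.2 * q.2) + (p.1 * q'.1 + p.2 * q'.2) := by
        simp only [Prod.fst_add, Prod.snd_add]; ring
      rw [h, Tr_add])
    (fun c p q => by
      show Tr n (p.1 * (c • q).1 + p.2 * (c • q).2) = _
      have h : p.1 * (c • q).1 + p.2 * (c • q).2 = c • (p.1 * q.1 + p.2 * q.2) := by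
        simp only [Prod.smul_fst, Prod.smul_snd, mul_smul_comm, smul_add]
      rw [h, Tr_smul])

lemma Bf_apply (n : ℕ) (p q : GaloisField 2 n × GaloisField 2 n) :
    Bf n p q = Tr n (p.1 * q.1 + p.2 * q.2) := rfl

/-- Orthogonality: a nonzero additive character sums to zero. -/
lemma sum_chi_eq_zero {ι : Type*} [Fintype ι] [AddCommGroup ι] (φ : ι → ZMod 2)
    (hadd : ∀ a b, φ (a + b) = φ a + φ b) (s₀ : ι) (hs₀ : φ s₀ ≠ 0) :
    ∑ s, χ (φ s) = 0 := by
  have h1 : φ s₀ = 1 := by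
    revert hs₀; generalize φ s₀ = c; revert c; decide
  have h2 : ∑ s, χ (φ (s + s₀)) = ∑ s, χ (φ s) :=
    Fintype.sum_bijective (· + s₀) (Equiv.addRight s₀).bijective _ _ (fun s => rfl)
  have h3 : ∀ s : ι, χ (φ (s + s₀)) = -χ (φ s) := by
    intro s
    rw [hadd, h1, χ_add]
    show χ (φ s) * (-1) = _
    ring
  rw [Finset.sum_congr rfl (fun s _ => h3 s), Finset.sum_neg_distrib] at h2
  linarith

section Key

variable (n : ℕ)

local notation "F" => GaloisField 2 n
local notation "V" => GaloisField 2 n × GaloisField 2 n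

/-- The character sum over a subspace `S` at a point `w`. -/
noncomputable def ES (S : Submodule (ZMod 2) V) (w : V) : ℤ :=
  ∑ s : ↥S, χ (Bf n ↑s w)

lemma ES_eq_card (S : Submodule (ZMod 2) V) (w : V)
    (hw : ∀ s ∈ S, Bf n s w = 0) :
    ES n S w = (Nat.card ↥S : ℤ) := by
  unfold ES
  rw [Finset.sum_congr rfl (fun s _ => by rw [hw s.1 s.2, χ_zero])]
  simp [Finset.card_univ, Nat.card_eq_fintype_card]

lemma ES_eq_zero (S : Submodule (ZMod 2) V) (w : V)
    (s₀ : ↥S) (hs₀ : Bf n ↑s₀ w ≠ 0) :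
    ES n S w = 0 := by
  exact sum_chi_eq_zero (fun s : ↥S => Bf n ↑s w)
    (fun a b => by
      show Bf n (↑a + ↑b) w = Bf n ↑a w + Bf n ↑b w
      rw [map_add, LinearMap.add_apply]) s₀ hs₀

lemma ES_nonneg (S : Submodule (ZMod 2) V) (w : V) : 0 ≤ ES n S w := by
  by_cases h : ∀ s ∈ S, Bf n s w = 0
  · rw [ES_eq_card n S w h]
    exact Int.natCast_nonneg _
  · push_neg at h
    obtain ⟨s, hs, hne⟩ := h
    rw [ES_eq_zero n S w ⟨s, hs⟩ hne]

lemma card_subtype_eq (hn : 0 < n) (S : Submodule (ZMod 2) V)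
    (hrank : Module.finrank (ZMod 2) S = n) :
    Nat.card ↥S = 2 ^ n := by
  rw [Nat.card_eq_fintype_card]
  have : Fintype.card ↥S = Fintype.card (ZMod 2) ^ Module.finrank (ZMod 2) ↥S :=
    Module.card_eq_pow_finrank
  rw [this, hrank, ZMod.card]

/-- The key counting lemma: if `S` is a WZ space of `f`, then distinct points of the
graph of `f` lie in distinct cosets of the orthogonal complement of `S`. -/
lemma key_lemma (hn : 0 < n) (f : F → F) (S : Submodule (ZMod 2) V)
    (hS : IsWZSpace n f S) (x y : F)
    (h : ∀ s ∈ S, Bf n s (x, f x) = Bf n s (y, f y)) : x = y := by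
  classical
  by_contra hxy
  set vy : V := (y, f y) with hvy
  have cardF : (Fintype.card F : ℤ) = 2 ^ n := by
    have := GaloisField.card 2 n hn.ne'
    rw [Nat.card_eq_fintype_card] at this
    exact_mod_cast this
  have cardS : ((Nat.card ↥S : ℕ) : ℤ) = 2 ^ n := by
    exact_mod_cast congrArg (Nat.cast (R := ℤ)) (card_subtype_eq n hn S hS.1)
  have hW00 : W n f 0 0 = 2 ^ n := by
    unfold W
    rw [Finset.sum_congr rfl (fun x _ => by
      rw [show (0 : F) * x + 0 * f x = 0 by ring, Tr_zero, ZMod.val_zero, pow_zero])]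
    simp [Finset.card_univ, cardF]
  have way1 : ∑ x' : F, ES n S ((x', f x') + vy) = 2 ^ n := by
    unfold ES
    rw [Finset.sum_comm]
    have hterm : ∀ s : ↥S,
        ∑ x' : F, χ (Bf n ↑s ((x', f x') + vy))
          = W n f (↑s : V).1 (↑s : V).2 * χ (Bf n ↑s vy) := by
      intro s
      have hW : W n f (↑s : V).1 (↑s : V).2 = ∑ x' : F, χ (Bf n ↑s (x', f x')) := by
        unfold W
        exact Finset.sum_congr rfl (fun x' _ => by rw [χ_apply, Bf_apply])
      rw [hW, Finset.sum_mul]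
      refine Finset.sum_congr rfl (fun x' _ => ?_)
      rw [map_add, χ_add]
    rw [Finset.sum_congr rfl (fun s _ => hterm s)]
    rw [Fintype.sum_eq_single (0 : ↥S) (fun s hs => by
      rw [hS.2 ↑s s.2 (fun h0 => hs (Subtype.ext h0)), zero_mul])]
    rw [show ((0 : ↥S) : V) = 0 from rfl, map_zero]
    simp only [LinearMap.zero_apply, χ_zero, mul_one]
    exact hW00
  have hx_term : ES n S ((x, f x) + vy) = 2 ^ n := by
    rw [ES_eq_card n S _ (fun s hs => by
      rw [map_add, h s hs]
      exact CharTwo.add_self_eq_zero _)]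
    exact cardS
  have hy_term : ES n S ((y, f y) + vy) = 2 ^ n := by
    rw [ES_eq_card n S _ (fun s hs => by
      rw [map_add]
      exact CharTwo.add_self_eq_zero _)]
    exact cardS
  have hle : ∑ x' ∈ ({x, y} : Finset F), ES n S ((x', f x') + vy)
      ≤ ∑ x' : F, ES n S ((x', f x') + vy) :=
    Finset.sum_le_sum_of_subset_of_nonneg (Finset.subset_univ _)
      (fun i _ _ => ES_nonneg n S _)
  rw [Finset.sum_pair hxy, hx_term, hy_term, way1] at hle
  have hpos : (0 : ℤ) < 2 ^ n := by positivity
  linarith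

end Key

/-- If `f : GF(2^n) → GF(2^n)` admits two trivially intersecting WZ spaces, then
`f` is CCZ equivalent to a permutation of `GF(2^n)`: there is a bijection `g`
and an `𝔽₂`-affine bijection of `GF(2^n) × GF(2^n)` mapping the graph of `f`
onto the graph of `g`. -/
theorem stmt3 (n : ℕ) (hn : 0 < n) (f : GaloisField 2 n → GaloisField 2 n)
    (S T : Submodule (ZMod 2) (GaloisField 2 n × GaloisField 2 n))
    (hS : IsWZSpace n f S) (hT : IsWZSpace n f T) (hST : S ⊓ T = ⊥) :
    ∃ (g : GaloisField 2 n → GaloisField 2 n)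
      (A : (GaloisField 2 n × GaloisField 2 n) ≃ᵃ[ZMod 2]
            (GaloisField 2 n × GaloisField 2 n)),
      Function.Bijective g ∧
        A '' {p : GaloisField 2 n × GaloisField 2 n | p.2 = f p.1} =
          {p : GaloisField 2 n × GaloisField 2 n | p.2 = g p.1} := by
  classical
  have hFrank : Module.finrank (ZMod 2) (GaloisField 2 n) = n := GaloisField.finrank 2 hn.ne'
  have hVrank : Module.finrank (ZMod 2) ((GaloisField 2 n) × (GaloisField 2 n)) = n + n := by
    rw [Module.finrank_prod, hFrank]
  have hnd : ∀ v : (GaloisField 2 n) × (GaloisField 2 n), (∀ p : (GaloisField 2 n) × (GaloisField 2 n), Bf n p v = 0) → v = 0 := by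
    intro v hv
    have htf := traceForm_nondegenerate (ZMod 2) (GaloisField 2 n)
    have h1 : v.1 = 0 := by
      apply htf.1 v.1
      intro a
      have := hv (a, 0)
      rw [Bf_apply] at this
      simpa [Algebra.traceForm_apply, Tr, mul_comm] using this
    have h2 : v.2 = 0 := by
      apply htf.1 v.2
      intro a
      have := hv (0, a)
      rw [Bf_apply] at this
      simpa [Algebra.traceForm_apply, Tr, mul_comm] using this
    exact Prod.ext h1 h2
  have hsup : S ⊔ T = ⊤ := by
    apply Submodule.eq_top_of_finrank_eq
    have := Submodule.finrank_sup_add_finrank_inf_eq S T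
    rw [hST, finrank_bot, hS.1, hT.1, add_zero] at this
    rw [this, hVrank]
  let piMap : (U : Submodule (ZMod 2) ((GaloisField 2 n) × (GaloisField 2 n))) → ((GaloisField 2 n) × (GaloisField 2 n)) →ₗ[(ZMod 2)] Module.Dual (ZMod 2) ↥U :=
    fun U =>
      { toFun := fun v => ((Bf n).flip v).comp U.subtype
        map_add' := fun v w => by
          show ((Bf n).flip (v + w)).comp U.subtype = _
          rw [map_add, LinearMap.add_comp]
        map_smul' := fun c v => by
          show ((Bf n).flip (c • v)).comp U.subtype = _
          rw [map_smul, RingHom.id_apply, LinearMap.smul_comp] }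
  let Φ : ((GaloisField 2 n) × (GaloisField 2 n)) →ₗ[(ZMod 2)] Module.Dual (ZMod 2) ↥S × Module.Dual (ZMod 2) ↥T :=
    (piMap S).prod (piMap T)
  have hΦinj : Function.Injective Φ := by
    rw [injective_iff_map_eq_zero]
    intro v hv
    have hS0 : ∀ s ∈ S, Bf n s v = 0 := by
      intro s hs
      have h := congrArg Prod.fst hv
      exact congrFun (congrArg (fun (l : Module.Dual (ZMod 2) ↥S) => (l : ↥S → (ZMod 2))) h) ⟨s, hs⟩
    have hT0 : ∀ t ∈ T, Bf n t v = 0 := by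
      intro t ht
      have h := congrArg Prod.snd hv
      exact congrFun (congrArg (fun (l : Module.Dual (ZMod 2) ↥T) => (l : ↥T → (ZMod 2))) h) ⟨t, ht⟩
    apply hnd
    intro p
    have hp : p ∈ S ⊔ T := hsup ▸ Submodule.mem_top
    obtain ⟨s, hs, t, ht, rfl⟩ := Submodule.mem_sup.mp hp
    rw [map_add, LinearMap.add_apply, hS0 s hs, hT0 t ht, add_zero]
  have hrankeq : Module.finrank (ZMod 2) ((GaloisField 2 n) × (GaloisField 2 n))
      = Module.finrank (ZMod 2) (Module.Dual (ZMod 2) ↥S × Module.Dual (ZMod 2) ↥T) := by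
    rw [Module.finrank_prod, Module.finrank_prod, Subspace.dual_finrank_eq,
      Subspace.dual_finrank_eq, hS.1, hT.1, hFrank]
  let e : ((GaloisField 2 n) × (GaloisField 2 n)) ≃ₗ[(ZMod 2)] Module.Dual (ZMod 2) ↥S × Module.Dual (ZMod 2) ↥T :=
    LinearMap.linearEquivOfInjective Φ hΦinj hrankeq
  let eS : Module.Dual (ZMod 2) ↥S ≃ₗ[(ZMod 2)] (GaloisField 2 n) :=
    LinearEquiv.ofFinrankEq _ _ (by rw [Subspace.dual_finrank_eq, hS.1, hFrank])
  let eT : Module.Dual (ZMod 2) ↥T ≃ₗ[(ZMod 2)] (GaloisField 2 n) :=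
    LinearEquiv.ofFinrankEq _ _ (by rw [Subspace.dual_finrank_eq, hT.1, hFrank])
  let Alin : ((GaloisField 2 n) × (GaloisField 2 n)) ≃ₗ[(ZMod 2)] ((GaloisField 2 n) × (GaloisField 2 n)) := e.trans (LinearEquiv.prodCongr eS eT)
  have hAlin : ∀ v : (GaloisField 2 n) × (GaloisField 2 n), Alin v = (eS (piMap S v), eT (piMap T v)) := by
    intro v
    show (LinearEquiv.prodCongr eS eT) (e v) = _
    have he : e v = Φ v := LinearMap.linearEquivOfInjective_apply hΦinj hrankeq v
    rw [he]
    rfl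
  set h₁ : (GaloisField 2 n) → (GaloisField 2 n) := fun x => eS (piMap S (x, f x)) with hh₁
  set h₂ : (GaloisField 2 n) → (GaloisField 2 n) := fun x => eT (piMap T (x, f x)) with hh₂
  have h₁inj : Function.Injective h₁ := by
    intro x y hxy
    have hpi : piMap S (x, f x) = piMap S (y, f y) := eS.injective hxy
    refine key_lemma n hn f S hS x y (fun s hs => ?_)
    exact congrFun (congrArg (fun (l : Module.Dual (ZMod 2) ↥S) => (l : ↥S → (ZMod 2))) hpi) ⟨s, hs⟩
  have h₂inj : Function.Injective h₂ := by
    intro x y hxy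
    have hpi : piMap T (x, f x) = piMap T (y, f y) := eT.injective hxy
    refine key_lemma n hn f T hT x y (fun t ht => ?_)
    exact congrFun (congrArg (fun (l : Module.Dual (ZMod 2) ↥T) => (l : ↥T → (ZMod 2))) hpi) ⟨t, ht⟩
  have h₁bij : Function.Bijective h₁ := Finite.injective_iff_bijective.mp h₁inj
  have h₂bij : Function.Bijective h₂ := Finite.injective_iff_bijective.mp h₂inj
  let H₁ : (GaloisField 2 n) ≃ (GaloisField 2 n) := Equiv.ofBijective h₁ h₁bij
  refine ⟨h₂ ∘ H₁.symm, Alin.toAffineEquiv, h₂bij.comp H₁.symm.bijective, ?_⟩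
  rw [LinearEquiv.coe_toAffineEquiv]
  ext q
  constructor
  · rintro ⟨p, hp, rfl⟩
    simp only [Set.mem_setOf_eq] at hp ⊢
    have hp' : p = (p.1, f p.1) := Prod.ext rfl hp
    rw [hp', hAlin]
    show eT (piMap T (p.1, f p.1)) = (h₂ ∘ H₁.symm) (eS (piMap S (p.1, f p.1)))
    have hx : eS (piMap S (p.1, f p.1)) = H₁ p.1 := rfl
    rw [hx]
    show h₂ p.1 = h₂ (H₁.symm (H₁ p.1))
    rw [Equiv.symm_apply_apply]
  · intro hq
    simp only [Set.mem_setOf_eq] at hq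
    refine ⟨(H₁.symm q.1, f (H₁.symm q.1)), rfl, ?_⟩
    rw [hAlin]
    have h1 : eS (piMap S (H₁.symm q.1, f (H₁.symm q.1))) = q.1 := by
      show H₁ (H₁.symm q.1) = q.1
      exact H₁.apply_symm_apply q.1
    have h2 : eT (piMap T (H₁.symm q.1, f (H₁.symm q.1))) = q.2 := by
      rw [hq]; rfl
    rw [h1, h2]
end

section
/- Let n be an odd positive integer, F the finite field with 2^n elements, and i a positive integer with gcd(i,n) = 1. If S is an i-compatible 𝔽₂-linear subspace of F and μ ∈ F, then μS = { μs : s ∈ S } is also an i-compatible 𝔽₂-linear subspace of F. -/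
/-- Scaling preserves `i`-compatibility: if `S` is an `i`-compatible `𝔽₂`-subspace of
`GF(2^n)` (`n` odd, `gcd(i,n) = 1`) and `μ ∈ GF(2^n)`, then `μS` is also an
`i`-compatible `𝔽₂`-subspace. Here `g` is the map `y ↦ y^(−1/(2^i+1))`,
characterized by `(g y)^(2^i+1) = y⁻¹` (with the convention `0⁻¹ = 0`), and a
subspace `S` is `i`-compatible when `g '' S` is again a subspace. -/
theorem stmt5 (n i : ℕ) (hn : 0 < n) (hodd : Odd n) (hi : 0 < i)
    (hgcd : Nat.gcd i n = 1)
    (g : GaloisField 2 n → GaloisField 2 n) (hg : ∀ y, (g y) ^ (2 ^ i + 1) = y⁻¹)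
    (S : Submodule (ZMod 2) (GaloisField 2 n))
    (hS : ∃ T : Submodule (ZMod 2) (GaloisField 2 n),
      (T : Set (GaloisField 2 n)) = g '' (S : Set (GaloisField 2 n)))
    (μ : GaloisField 2 n) :
    ∃ S' : Submodule (ZMod 2) (GaloisField 2 n),
      (S' : Set (GaloisField 2 n)) = (fun s => μ * s) '' (S : Set (GaloisField 2 n)) ∧
      ∃ T' : Submodule (ZMod 2) (GaloisField 2 n),
        (T' : Set (GaloisField 2 n)) =
          g '' ((fun s => μ * s) '' (S : Set (GaloisField 2 n))) := by
  classical
  obtain ⟨T, hT⟩ := hS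
  let F := GaloisField 2 n
  let k := 2 ^ i + 1
  have hk : k = 2 ^ i + 1 := rfl
  -- coprimality of k with 2^n - 1
  have hcop : Nat.Coprime (2 ^ n - 1) k := by
    set d := Nat.gcd (2 ^ n - 1) k with hd
    have hdpos : 0 < d :=
      Nat.gcd_pos_of_pos_left _ (by
        have : (1:ℕ) < 2 ^ n := Nat.one_lt_two_pow_iff.mpr hn.ne'
        omega)
    haveI : NeZero d := ⟨hdpos.ne'⟩
    have h1 : d ∣ 2 ^ n - 1 := Nat.gcd_dvd_left _ _
    have h2 : d ∣ 2 ^ (2 * i) - 1 := by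
      refine (Nat.gcd_dvd_right _ _).trans ⟨2 ^ i - 1, ?_⟩
      have h1i : (1:ℕ) ≤ 2 ^ i := Nat.one_le_two_pow
      have h2i : 2 ^ (2 * i) = 2 ^ i * 2 ^ i := by rw [two_mul, pow_add]
      obtain ⟨m, hm⟩ := Nat.exists_eq_add_of_le h1i
      rw [h2i, hk, hm]
      have e1 : (1 + m) * (1 + m) = m * m + 2 * m + 1 := by ring
      have e2 : (1 + m + 1) * (1 + m - 1) = m * m + 2 * m := by
        have : 1 + m - 1 = m := by omega
        rw [this]; ring
      omega
    have key : ∀ m : ℕ, d ∣ 2 ^ m - 1 → (2 : ZMod d) ^ m = 1 := by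
      intro m hm
      have h1m : (1:ℕ) ≤ 2 ^ m := Nat.one_le_two_pow
      have := (ZMod.natCast_eq_zero_iff _ d).mpr hm
      rw [Nat.cast_sub h1m] at this
      push_cast at this
      linear_combination this
    have e1 := key n h1
    have e2 := key (2 * i) h2
    have hgcd2 : Nat.gcd (2 * i) n = 1 := by
      exact Nat.Coprime.mul (Nat.coprime_two_left.mpr hodd) hgcd
    have hord : orderOf (2 : ZMod d) ∣ 1 := by
      have h := Nat.dvd_gcd (orderOf_dvd_of_pow_eq_one e2) (orderOf_dvd_of_pow_eq_one e1)
      rwa [hgcd2] at h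
    have h21 : (2 : ZMod d) = 1 :=
      orderOf_eq_one_iff.mp (Nat.dvd_one.mp hord)
    have : ((1 : ℕ) : ZMod d) = 0 := by push_cast; linear_combination h21
    exact Nat.eq_one_of_dvd_one ((ZMod.natCast_eq_zero_iff 1 d).mp this)
  -- injectivity of x ↦ x ^ k on F
  have hcard : Nat.card Fˣ = 2 ^ n - 1 := by
    rw [Nat.card_units, GaloisField.card 2 n hn.ne']
  have hinj : Function.Injective (fun x : F => x ^ k) := by
    intro x y hxy
    simp only at hxy
    have hk0 : k ≠ 0 := by positivity
    by_cases hx : x = 0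
    · subst hx
      rw [zero_pow hk0] at hxy
      exact ((pow_eq_zero_iff hk0).mp hxy.symm).symm
    · by_cases hy : y = 0
      · subst hy
        rw [zero_pow hk0] at hxy
        exact absurd ((pow_eq_zero_iff hk0).mp hxy) hx
      · have hb : Function.Bijective (· ^ k : Fˣ → Fˣ) :=
          Nat.Coprime.pow_left_bijective (by rw [hcard]; exact hcop)
        have : (Units.mk0 x hx) ^ k = (Units.mk0 y hy) ^ k := by
          ext; simpa using hxy
        have := hb.injective this
        simpa [Units.ext_iff] using this
  -- g is multiplicative on products with μ
  have hgmul : ∀ a b : F, g (a * b) = g a * g b := by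
    intro a b
    apply hinj
    simp only [hk, mul_pow, hg, mul_inv]
  -- build S' and T'
  refine ⟨S.map (LinearMap.mulLeft (ZMod 2) μ), ?_, T.map (LinearMap.mulLeft (ZMod 2) (g μ)), ?_⟩
  · ext x
    simp [LinearMap.mulLeft_apply, Set.mem_image]
  · ext x
    simp only [Submodule.map_coe, hT, Set.image_image, Set.mem_image,
      LinearMap.mulLeft_apply]
    constructor
    · rintro ⟨s, hs, rfl⟩
      exact ⟨s, hs, hgmul μ s⟩
    · rintro ⟨s, hs, rfl⟩
      exact ⟨s, hs, (hgmul μ s).symm⟩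
end

section
/- Let n be an odd positive integer, F the finite field with 2^n elements, i a positive integer with gcd(i,n) = 1, and m a positive divisor of n. Then the subfield F_{2^m} = { x ∈ F : x^(2^m) = x } satisfies { ξ^(−1/(2^i+1)) : ξ ∈ F_{2^m} } = F_{2^m}; in particular, F_{2^m} is an i-compatible subspace of F. -/
private lemma pow_pow_mul_aux {F : Type*} [Field F] (x : F) (b q : ℕ)
    (hb : x ^ (2 ^ b) = x) : x ^ (2 ^ (b * q)) = x := by
  induction q with
  | zero => simp
  | succ q ih =>
      have h : b * (q + 1) = b * q + b := by ring
      rw [h, pow_add, pow_mul, ih, hb]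

private lemma pow_pow_gcd_aux {F : Type*} [Field F] (x : F) :
    ∀ a b : ℕ, x ^ (2 ^ a) = x → x ^ (2 ^ b) = x → x ^ (2 ^ Nat.gcd a b) = x := by
  intro a b
  induction a, b using Nat.gcd.induction with
  | H0 b => intro _ h; simpa using h
  | H1 a b ha ih =>
      intro hA hB
      rw [Nat.gcd_rec]
      refine ih ?_ hA
      have hmul : x ^ (2 ^ (a * (b / a))) = x := pow_pow_mul_aux x a (b / a) hA
      have hb : a * (b / a) + b % a = b := Nat.div_add_mod b a
      calc x ^ (2 ^ (b % a)) = (x ^ (2 ^ (a * (b / a)))) ^ (2 ^ (b % a)) := by rw [hmul]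
        _ = x ^ (2 ^ (a * (b / a) + b % a)) := by rw [pow_add, pow_mul, pow_mul]
        _ = x := by rw [hb, hB]

private lemma inj_pow_aux (n i : ℕ) (hodd : Odd n) (hgcd : Nat.gcd i n = 1) :
    Function.Injective (fun x : GaloisField 2 n => x ^ (2 ^ i + 1)) := by
  have hn0 : n ≠ 0 := by rintro rfl; exact (Nat.not_odd_iff_even.mpr Even.zero) hodd
  intro a b hab
  simp only at hab
  by_cases hb : b = 0
  · subst hb
    rw [zero_pow (by positivity)] at hab
    exact pow_eq_zero_iff (by positivity) |>.mp hab
  by_cases hazero : a = 0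
  · subst hazero
    rw [zero_pow (by positivity)] at hab
    exact (hb ((pow_eq_zero_iff (by positivity)).mp hab.symm)).elim
  set c : GaloisField 2 n := a * b⁻¹ with hc
  have hcpow : c ^ (2 ^ i + 1) = 1 := by
    rw [hc, mul_pow, hab, inv_pow, mul_inv_cancel₀ (pow_ne_zero _ hb)]
  have hc2i : c ^ (2 ^ (2 * i)) = c := by
    have h0 : c ^ (2 ^ i) * c = 1 := by rw [← pow_succ, hcpow]
    have h1 : c ^ (2 ^ i) = c⁻¹ := eq_inv_of_mul_eq_one_left h0
    have h2 : c ^ (2 ^ (2 * i)) = (c ^ (2 ^ i)) ^ (2 ^ i) := by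
      rw [← pow_mul, two_mul, pow_add]
    rw [h2, h1, inv_pow, h1, inv_inv]
  have hcn : c ^ (2 ^ n) = c := by
    letI : Fintype (GaloisField 2 n) := Fintype.ofFinite _
    have hcard : Fintype.card (GaloisField 2 n) = 2 ^ n := by
      rw [← Nat.card_eq_fintype_card, GaloisField.card 2 n hn0]
    have := FiniteField.pow_card c
    rwa [hcard] at this
  have hg2 : Nat.gcd (2 * i) n = 1 := by
    have h2 : Nat.Coprime 2 n := Nat.coprime_two_left.mpr hodd
    rw [Nat.Coprime.gcd_mul_left_cancel i h2, hgcd]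
  have hfix : c ^ (2 : ℕ) = c := by
    have := pow_pow_gcd_aux c (2 * i) n hc2i hcn
    rwa [hg2, pow_one] at this
  have hcne : c ≠ 0 := mul_ne_zero hazero (inv_ne_zero hb)
  have hc1 : c = 1 := by
    have h : c * c = c * 1 := by rw [mul_one, ← pow_two]; exact hfix
    exact mul_left_cancel₀ hcne h
  have h : a * b⁻¹ = 1 := hc1
  field_simp at h
  exact h

/-- For `m ∣ n` (`n` odd, `gcd(i,n) = 1`), the subfield `F_{2^m} = {x : x^(2^m) = x}`
of `GF(2^n)` satisfies `{ξ^(−1/(2^i+1)) : ξ ∈ F_{2^m}} = F_{2^m}`; in particular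
`F_{2^m}` is an `i`-compatible subspace. Here `g` is the map `y ↦ y^(−1/(2^i+1))`,
characterized by `(g y)^(2^i+1) = y⁻¹` (with the convention `0⁻¹ = 0`). -/
theorem stmt6 (n i m : ℕ) (hn : 0 < n) (hodd : Odd n) (hi : 0 < i)
    (hgcd : Nat.gcd i n = 1) (hm : 0 < m) (hmn : m ∣ n)
    (g : GaloisField 2 n → GaloisField 2 n) (hg : ∀ y, (g y) ^ (2 ^ i + 1) = y⁻¹) :
    g '' {x : GaloisField 2 n | x ^ (2 ^ m) = x} =
        {x : GaloisField 2 n | x ^ (2 ^ m) = x} ∧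
      ∃ K : Submodule (ZMod 2) (GaloisField 2 n),
        (K : Set (GaloisField 2 n)) = {x : GaloisField 2 n | x ^ (2 ^ m) = x} := by
  have hinj := inj_pow_aux n i hodd hgcd
  constructor
  · ext x
    simp only [Set.mem_image, Set.mem_setOf_eq]
    constructor
    · rintro ⟨y, hy, rfl⟩
      apply hinj
      simp only
      rw [← pow_mul, mul_comm, pow_mul, hg, inv_pow, hy]
    · intro hx
      refine ⟨(x ^ (2 ^ i + 1))⁻¹, ?_, ?_⟩
      · rw [inv_pow, ← pow_mul, mul_comm, pow_mul, hx]
      · apply hinj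
        simp only
        rw [hg, inv_inv]
  · refine ⟨⟨⟨⟨{x : GaloisField 2 n | x ^ (2 ^ m) = x}, ?_⟩, ?_⟩, ?_⟩, rfl⟩
    · intro a b ha hb
      simp only [Set.mem_setOf_eq] at *
      rw [add_pow_char_pow, ha, hb]
    · simp only [Set.mem_setOf_eq]
      exact zero_pow (pow_ne_zero m two_ne_zero)
    · intro c x hx
      have hc : c = 0 ∨ c = 1 := by revert c; decide
      rcases hc with rfl | rfl
      · simp only [zero_smul, Set.mem_setOf_eq]
        exact zero_pow (pow_ne_zero m two_ne_zero)
      · simpa [one_smul] using hx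
end

section
/- Let n be an odd positive integer divisible by 3, F the finite field with 2^n elements, and i a positive integer with gcd(i,n) = 1. Let F_{2^3} = { x ∈ F : x^8 = x } be the subfield of F with 8 elements. Then every 𝔽₂-linear subspace S of F contained in F_{2^3} is i-compatible. -/
lemma stmt8_cop_aux (n i : ℕ) (hodd : Odd n) (hgcd : Nat.gcd i n = 1) :
    Nat.Coprime (2 ^ i + 1) (2 ^ n - 1) := by
  set d := Nat.gcd (2 ^ i + 1) (2 ^ n - 1) with hd
  have h1 : d ∣ 2 ^ (2 * i) - 1 := by
    refine (Nat.gcd_dvd_left _ _).trans ?_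
    have : 2 ^ (2 * i) - 1 = (2 ^ i + 1) * (2 ^ i - 1) := by
      have := Nat.sq_sub_sq (2 ^ i) 1
      simpa [pow_mul, mul_comm, pow_right_comm] using this
    rw [this]; exact Dvd.intro _ rfl
  have h2 : d ∣ 2 ^ n - 1 := Nat.gcd_dvd_right _ _
  have key : ∀ m : ℕ, d ∣ 2 ^ m - 1 → (2 : ZMod d) ^ m = 1 := by
    intro m hm
    have h : ((2 ^ m - 1 : ℕ) : ZMod d) = 0 := (ZMod.natCast_eq_zero_iff _ _).2 hm
    have h1m : 1 ≤ 2 ^ m := Nat.one_le_two_pow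
    rw [Nat.cast_sub h1m] at h
    push_cast at h
    linear_combination h
  have e3 : (2 : ZMod d) ^ Nat.gcd (2 * i) n = 1 := pow_gcd_eq_one.2 ⟨key _ h1, key _ h2⟩
  have hg2 : Nat.gcd (2 * i) n = 1 := by
    rw [Nat.Coprime.gcd_mul_left_cancel i hodd.coprime_two_left, hgcd]
  rw [hg2, pow_one] at e3
  have : ((1 : ℕ) : ZMod d) = 0 := by push_cast; linear_combination e3
  exact Nat.dvd_one.1 ((ZMod.natCast_eq_zero_iff _ _).1 this)


/-- For `n` odd and divisible by `3` and `gcd(i,n) = 1`, every `𝔽₂`-subspace `S` of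
`GF(2^n)` contained in the subfield `F_{2^3} = {x : x^8 = x}` is `i`-compatible.
Here `g` is the map `y ↦ y^(−1/(2^i+1))`, characterized by `(g y)^(2^i+1) = y⁻¹`
(with the convention `0⁻¹ = 0`), and `S` is `i`-compatible when `g '' S` is again
an `𝔽₂`-subspace. -/
theorem stmt8 (n i : ℕ) (hn : 0 < n) (hodd : Odd n) (h3 : 3 ∣ n) (hi : 0 < i)
    (hgcd : Nat.gcd i n = 1)
    (g : GaloisField 2 n → GaloisField 2 n) (hg : ∀ y, (g y) ^ (2 ^ i + 1) = y⁻¹)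
    (S : Submodule (ZMod 2) (GaloisField 2 n))
    (hS : (S : Set (GaloisField 2 n)) ⊆ {x : GaloisField 2 n | x ^ 8 = x}) :
    ∃ T : Submodule (ZMod 2) (GaloisField 2 n),
      (T : Set (GaloisField 2 n)) = g '' (S : Set (GaloisField 2 n)) := by
  classical
  have hF : GaloisField 2 n = GaloisField 2 n := rfl
  set k := 2 ^ i + 1 with hk
  set m := i % 3 with hm
  -- m = 1 or 2
  have hm12 : m = 1 ∨ m = 2 := by
    have h3i : ¬ (3 ∣ i) := by
      intro h
      have h' : 3 ∣ Nat.gcd i n := Nat.dvd_gcd h h3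
      rw [hgcd] at h'
      norm_num at h'
    have h0 : m ≠ 0 := fun h0 => h3i (Nat.dvd_of_mod_eq_zero (hm ▸ h0))
    have hlt : m < 3 := Nat.mod_lt _ (by norm_num)
    omega
  -- 7 ∣ 2^m * k + 1
  have hdvd7 : 7 ∣ 2 ^ m * k + 1 := by
    have h2i : (2 : ZMod 7) ^ i = 2 ^ m := by
      have hieq : i = 3 * (i / 3) + m := by rw [hm]; omega
      rw [hieq, pow_add, pow_mul]
      have h8 : (2 : ZMod 7) ^ 3 = 1 := by decide
      rw [h8, one_pow, one_mul]
    have : ((2 ^ m * k + 1 : ℕ) : ZMod 7) = 0 := by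
      push_cast [hk]
      rw [h2i]
      rcases hm12 with h | h <;> rw [h] <;> decide
    exact (ZMod.natCast_eq_zero_iff _ _).1 this
  -- injectivity of x ↦ x^k
  have hninj : Function.Injective (fun x : GaloisField 2 n => x ^ k) := by
    intro x y hxy
    simp only at hxy
    rcases eq_or_ne x 0 with rfl | hx
    · rw [zero_pow (by positivity)] at hxy
      exact (pow_eq_zero_iff (by positivity)).1 hxy.symm |>.symm
    rcases eq_or_ne y 0 with rfl | hy
    · rw [zero_pow (by positivity)] at hxy
      exact (pow_eq_zero_iff (by positivity)).1 hxy
    have hcard : Nat.card (GaloisField 2 n)ˣ = 2 ^ n - 1 := by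
      rw [Nat.card_units, GaloisField.card 2 n hn.ne']
    have hcop : (Nat.card (GaloisField 2 n)ˣ).Coprime k := by
      rw [hcard]
      exact (stmt8_cop_aux n i hodd hgcd).symm
    have := (powCoprime hcop).injective (a₁ := Units.mk0 x hx) (a₂ := Units.mk0 y hy) ?_
    · exact congrArg Units.val this
    · ext
      simpa [powCoprime] using hxy
  -- g agrees with frobenius^m on S
  have hgeq : ∀ y ∈ S, g y = y ^ 2 ^ m := by
    intro y hy
    rcases eq_or_ne y 0 with rfl | hy0
    · have : (g 0) ^ k = 0 := by rw [hg 0, inv_zero]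
      have h0 : g 0 = 0 := (pow_eq_zero_iff (by positivity)).1 this
      rw [h0, zero_pow (by positivity)]
    · have hy8 : y ^ 8 = y := hS hy
      have hy7 : y ^ 7 = 1 := by
        have : y ^ 7 * y = 1 * y := by rw [one_mul, ← pow_succ]; exact hy8
        exact mul_right_cancel₀ hy0 this
      apply hninj
      simp only
      rw [hg y, ← pow_mul]
      obtain ⟨t, ht⟩ := hdvd7
      have h1 : y * y ^ (2 ^ m * k) = 1 := by
        rw [← pow_succ', ht, pow_mul, hy7, one_pow]
      exact (eq_inv_of_mul_eq_one_right h1).symm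
  -- the linear map x ↦ x^(2^m)
  haveI : Fact (Nat.Prime 2) := ⟨Nat.prime_two⟩
  let f : GaloisField 2 n →ₗ[ZMod 2] GaloisField 2 n :=
    { toFun := fun x => x ^ 2 ^ m
      map_add' := fun x y => add_pow_char_pow x y 2 m
      map_smul' := fun c x => by
        simp only [RingHom.id_apply, smul_pow]
        rw [ZMod.pow_card_pow] }
  refine ⟨S.map f, ?_⟩
  rw [Submodule.map_coe]
  apply Set.image_congr
  intro y hy
  show y ^ 2 ^ m = g y
  exact (hgeq y hy).symm
end
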